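/- arXiv:1710.02880 — 4 statements merged into one kernel-verified Lean document; each statement's English description precedes it below -/
import Mathlib

section
/- Let p̂ satisfy c/(β^{d/2}‖θ‖^d) ≤ p̂(θ) ≤ C/(β^{d/2}‖θ‖^d) on [-π,π]^d \ {0} (i.e. r = d). Then S(2π/L) and S(4π/L) both scale as (log L)/β^{d/2}: there exist constants c', C' > 0 and L̄ such that c'·(log L)/β^{d/2} ≤ S(4π/L) ≤ S(2π/L) ≤ C'·(log L)/β^{d/2} for all L ≥ L̄. -/
/-!
Measure everything in the sup norm `‖θ‖ = maxᵢ |θᵢ|`, which is within a factor `√d` of the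
Euclidean norm, so that on the region `p̂(θ)` is squeezed between multiples of
`β^{-d/2} ‖θ‖^{-d}`. Cut the region into the dyadic shells `2ᵏa ≤ ‖θ‖ < 2ᵏ⁺¹a`. A shell has
volume at most `(2ᵏ⁺²a)^d`, so it contributes `O(β^{-d/2})` to the integral; a shell inside the
cube `[-π, π]^d` contains the box `[2ᵏa, 2ᵏ⁺¹a)^d`, so it contributes `≳ β^{-d/2}`. For `a ≍ 1/L`
about `log₂ L` shells meet the region, and all but two of them lie inside the cube.
-/

open MeasureTheory Set Metric Real

section DyadicShells

variable {X G : Type*} [PseudoMetricSpace X] [MeasurableSpace X] [OpensMeasurableSpace X]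
  [NormedAddCommGroup G] [NormedSpace ℝ G] {μ : Measure X} {f : X → G} {s : Set X}

theorem setIntegral_inter_ball_diff_ball_eq_sum (hs : MeasurableSet s) (hf : IntegrableOn f s μ)
    (x₀ : X) {r : ℕ → ℝ} (hr : Monotone r) (n : ℕ) :
    ∫ x in s ∩ (ball x₀ (r n) \ ball x₀ (r 0)), f x ∂μ =
      ∑ k ∈ Finset.range n, ∫ x in s ∩ (ball x₀ (r (k + 1)) \ ball x₀ (r k)), f x ∂μ := by
  induction n with
  | zero => simp
  | succ n ih =>
    have hunion : s ∩ (ball x₀ (r (n + 1)) \ ball x₀ (r 0)) =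
        s ∩ (ball x₀ (r n) \ ball x₀ (r 0)) ∪ s ∩ (ball x₀ (r (n + 1)) \ ball x₀ (r n)) := by
      rw [← inter_union_distrib_left, union_comm, sdiff_union_sdiff_cancel
        (ball_subset_ball (hr n.le_succ)) (ball_subset_ball (hr n.zero_le))]
    rw [Finset.sum_range_succ, ← ih, hunion,
      setIntegral_union _ (hs.inter (measurableSet_ball.diff measurableSet_ball))
        (hf.mono_set inter_subset_left) (hf.mono_set inter_subset_left)]
    exact Disjoint.mono (inter_subset_right.trans sdiff_subset) inter_subset_right
      disjoint_sdiff_right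

end DyadicShells

section SupNorm

variable {d : ℕ}

theorem norm_le_sqrt_sum_sq (θ : Fin d → ℝ) : ‖θ‖ ≤ √(∑ i, θ i ^ 2) :=
  (pi_norm_le_iff_of_nonneg (sqrt_nonneg _)).2 fun i => by
    rw [Real.norm_eq_abs, ← sqrt_sq_eq_abs]
    exact sqrt_le_sqrt (Finset.single_le_sum (fun j _ => sq_nonneg (θ j)) (Finset.mem_univ i))

theorem sqrt_sum_sq_le (θ : Fin d → ℝ) : √(∑ i, θ i ^ 2) ≤ √d * ‖θ‖ := by
  rw [← sqrt_sq (norm_nonneg θ), ← sqrt_mul (Nat.cast_nonneg _)]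
  refine sqrt_le_sqrt ?_
  calc ∑ i, θ i ^ 2 ≤ ∑ _i : Fin d, ‖θ‖ ^ 2 := Finset.sum_le_sum fun i _ => by
        rw [← sq_abs]
        exact pow_le_pow_left₀ (abs_nonneg _) (norm_le_pi_norm θ i) 2
    _ = d * ‖θ‖ ^ 2 := by simp

end SupNorm

section AbsIccPi

variable {d : ℕ}

def absIccPi (a b : ℝ) : Set (Fin d → ℝ) := {θ | ∀ i, a ≤ |θ i| ∧ |θ i| ≤ b}

theorem measurableSet_absIccPi (a b : ℝ) : MeasurableSet (absIccPi (d := d) a b) := by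
  unfold absIccPi
  measurability

theorem volume_absIccPi_lt_top (a b : ℝ) : volume (absIccPi (d := d) a b) < ⊤ :=
  measure_lt_top_of_subset (s := univ.pi fun _ => Icc (-b) b)
    (fun _ hθ i _ => abs_le.1 (hθ i).2) (isCompact_univ_pi fun _ => isCompact_Icc).measure_lt_top.ne

variable {a b : ℝ}

theorem setIntegral_absIccPi_le_of_le {f : (Fin d → ℝ) → ℝ} {a' : ℝ}
    (hf : IntegrableOn f (absIccPi a b)) (hnonneg : ∀ θ ∈ absIccPi a b, 0 ≤ f θ) (haa' : a ≤ a') :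
    ∫ θ in absIccPi a' b, f θ ≤ ∫ θ in absIccPi a b, f θ :=
  setIntegral_mono_set hf (ae_restrict_of_forall_mem (measurableSet_absIccPi a b) hnonneg)
    (Filter.Eventually.of_forall fun _ hθ i => ⟨haa'.trans (hθ i).1, (hθ i).2⟩)

variable [NeZero d] {θ : Fin d → ℝ}

theorem le_norm_of_mem_absIccPi (hθ : θ ∈ absIccPi a b) : a ≤ ‖θ‖ :=
  (hθ 0).1.trans (norm_le_pi_norm θ 0)

theorem norm_le_of_mem_absIccPi (hθ : θ ∈ absIccPi a b) : ‖θ‖ ≤ b :=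
  (pi_norm_le_iff_of_nonneg ((abs_nonneg _).trans (hθ 0).2)).2 fun i => (hθ i).2

theorem le_and_le_div_norm_pow_of_mem_absIccPi {f : (Fin d → ℝ) → ℝ} {c C : ℝ} (hc : 0 ≤ c)
    (hC : 0 ≤ C) (hf : ∀ θ : Fin d → ℝ, θ ≠ 0 → (∀ i, |θ i| ≤ b) →
      c / √(∑ i, θ i ^ 2) ^ d ≤ f θ ∧ f θ ≤ C / √(∑ i, θ i ^ 2) ^ d)
    (ha : 0 < a) (hθ : θ ∈ absIccPi a b) : c / √d ^ d / ‖θ‖ ^ d ≤ f θ ∧ f θ ≤ C / ‖θ‖ ^ d := by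
  have hθ0 : 0 < ‖θ‖ := ha.trans_le (le_norm_of_mem_absIccPi hθ)
  have := hθ0.trans_le (norm_le_sqrt_sum_sq θ)
  obtain ⟨hlow, hup⟩ := hf θ (norm_pos_iff.1 hθ0) fun i => (hθ i).2
  constructor
  · refine le_trans ?_ hlow
    rw [div_div, ← mul_pow]
    gcongr
    exact sqrt_sum_sq_le θ
  · refine hup.trans ?_
    gcongr
    exact norm_le_sqrt_sum_sq θ

theorem integrableOn_absIccPi {f : (Fin d → ℝ) → ℝ} (hf : Measurable f) {m M : ℝ} (ha : 0 < a)
    (hm : 0 ≤ m) (hM : 0 ≤ M)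
    (hbound : ∀ θ ∈ absIccPi a b, m / ‖θ‖ ^ d ≤ f θ ∧ f θ ≤ M / ‖θ‖ ^ d) :
    IntegrableOn f (absIccPi a b) := by
  refine Measure.integrableOn_of_bounded (volume_absIccPi_lt_top a b).ne
    hf.aestronglyMeasurable (M := M / a ^ d)
    (ae_restrict_of_forall_mem (measurableSet_absIccPi a b) fun θ hθ => ?_)
  rw [Real.norm_of_nonneg ((div_nonneg hm (by positivity)).trans (hbound θ hθ).1)]
  refine (hbound θ hθ).2.trans ?_
  gcongr
  exact le_norm_of_mem_absIccPi hθ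

theorem pow_le_volume_real_absIccPi_inter_shell {ρ : ℝ} (hρ : 0 < ρ) (haρ : a ≤ ρ)
    (hρb : 2 * ρ ≤ b) :
    ρ ^ d ≤ volume.real (absIccPi a b ∩ (ball (0 : Fin d → ℝ) (2 * ρ) \ ball 0 ρ)) := by
  have hbox : univ.pi (fun _ => Ico ρ (2 * ρ)) ⊆
      absIccPi a b ∩ (ball (0 : Fin d → ℝ) (2 * ρ) \ ball 0 ρ) := by
    intro θ hθ
    have hθ' : ∀ i, ρ ≤ |θ i| ∧ |θ i| < 2 * ρ := fun i => by
      obtain ⟨h1, h2⟩ := hθ i (mem_univ i)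
      rw [abs_of_pos (hρ.trans_le h1)]
      exact ⟨h1, h2⟩
    refine ⟨fun i => ⟨haρ.trans (hθ' i).1, (hθ' i).2.le.trans hρb⟩,
      mem_ball_zero_iff.2 ((pi_norm_lt_iff (by positivity)).2 fun i => (hθ' i).2), fun h => ?_⟩
    exact (mem_ball_zero_iff.1 h).not_ge ((hθ' 0).1.trans (norm_le_pi_norm θ 0))
  calc ρ ^ d = volume.real (univ.pi fun _ : Fin d => Ico ρ (2 * ρ)) := by
        rw [measureReal_def, Real.volume_pi_Ico, Finset.prod_const, Finset.card_univ,
          Fintype.card_fin, ENNReal.toReal_pow, two_mul, add_sub_cancel_right,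
          ENNReal.toReal_ofReal hρ.le]
    _ ≤ _ := measureReal_mono hbox (ne_top_of_le_ne_top (volume_absIccPi_lt_top a b).ne
        (measure_mono inter_subset_left))

end AbsIccPi

section Shells

variable {d : ℕ} {f : (Fin d → ℝ) → ℝ} {s : Set (Fin d → ℝ)} {ρ : ℝ}

theorem setIntegral_inter_shell_le (hs : MeasurableSet s) (hρ : 0 < ρ) {M : ℝ} (hM : 0 ≤ M)
    (hf : IntegrableOn f (s ∩ (ball 0 (2 * ρ) \ ball 0 ρ)))
    (hbound : ∀ θ ∈ s ∩ (ball 0 (2 * ρ) \ ball 0 ρ), f θ ≤ M / ‖θ‖ ^ d) :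
    ∫ θ in s ∩ (ball 0 (2 * ρ) \ ball 0 ρ), f θ ≤ 4 ^ d * M := by
  set t := s ∩ (ball (0 : Fin d → ℝ) (2 * ρ) \ ball 0 ρ)
  have hvol : volume t ≤ ENNReal.ofReal ((4 * ρ) ^ d) := by
    calc volume t ≤ volume (ball (0 : Fin d → ℝ) (2 * ρ)) :=
          measure_mono (inter_subset_right.trans sdiff_subset)
      _ = ENNReal.ofReal ((4 * ρ) ^ d) := by
          rw [Real.volume_pi_ball _ (by positivity), Fintype.card_fin]
          ring_nf
  have hvol_ne_top : volume t ≠ ⊤ := ne_top_of_le_ne_top ENNReal.ofReal_ne_top hvol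
  calc ∫ θ in t, f θ ≤ ∫ _ in t, M / ρ ^ d := by
        refine setIntegral_mono_on hf (integrableOn_const hvol_ne_top)
          (hs.inter (measurableSet_ball.diff measurableSet_ball)) fun θ hθ => ?_
        refine (hbound θ hθ).trans ?_
        gcongr
        simpa using hθ.2.2
    _ = volume.real t * (M / ρ ^ d) := by rw [setIntegral_const, smul_eq_mul]
    _ ≤ (4 * ρ) ^ d * (M / ρ ^ d) := by
        gcongr
        exact ENNReal.toReal_le_of_le_ofReal (by positivity) hvol
    _ = 4 ^ d * M := by field_simp; ring

theorem le_setIntegral_inter_shell (hs : MeasurableSet s) (hρ : 0 < ρ) {m : ℝ} (hm : 0 ≤ m)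
    (hf : IntegrableOn f (s ∩ (ball 0 (2 * ρ) \ ball 0 ρ)))
    (hbound : ∀ θ ∈ s ∩ (ball 0 (2 * ρ) \ ball 0 ρ), m / ‖θ‖ ^ d ≤ f θ) :
    m / (2 * ρ) ^ d * volume.real (s ∩ (ball 0 (2 * ρ) \ ball 0 ρ)) ≤
      ∫ θ in s ∩ (ball 0 (2 * ρ) \ ball 0 ρ), f θ := by
  refine setIntegral_ge_of_const_le_real (hs.inter (measurableSet_ball.diff measurableSet_ball))
    (measure_ne_top_of_subset (inter_subset_right.trans sdiff_subset)
      measure_ball_lt_top.ne) (fun θ hθ => ?_) hf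
  refine le_trans ?_ (hbound θ hθ)
  have : 0 < ‖θ‖ := hρ.trans_le (by simpa using hθ.2.2)
  gcongr
  exact (mem_ball_zero_iff.1 hθ.2.1).le

end Shells

section DyadicBounds

variable {d : ℕ} [NeZero d] {f : (Fin d → ℝ) → ℝ} {a b : ℝ}

theorem monotone_two_pow_mul (ha : 0 ≤ a) : Monotone fun k : ℕ => (2 : ℝ) ^ k * a :=
  fun _ _ h => mul_le_mul_of_nonneg_right (pow_le_pow_right₀ one_le_two h) ha

theorem setIntegral_absIccPi_le (ha : 0 < a) {M : ℝ} (hM : 0 ≤ M)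
    (hf : IntegrableOn f (absIccPi a b)) (hbound : ∀ θ ∈ absIccPi a b, f θ ≤ M / ‖θ‖ ^ d)
    {n : ℕ} (hn : b < 2 ^ n * a) : ∫ θ in absIccPi a b, f θ ≤ n * (4 ^ d * M) := by
  have hcover :
      absIccPi a b ∩ (ball (0 : Fin d → ℝ) (2 ^ n * a) \ ball 0 (2 ^ 0 * a)) = absIccPi a b :=
    inter_eq_left.2 fun θ hθ =>
      ⟨mem_ball_zero_iff.2 ((norm_le_of_mem_absIccPi hθ).trans_lt hn),
        fun h => (mem_ball_zero_iff.1 h).not_ge (by simpa using le_norm_of_mem_absIccPi hθ)⟩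
  rw [← hcover, setIntegral_inter_ball_diff_ball_eq_sum (measurableSet_absIccPi a b) hf 0
    (monotone_two_pow_mul ha.le) n]
  calc _ ≤ ∑ _k ∈ Finset.range n, 4 ^ d * M := Finset.sum_le_sum fun k _ => by
        simp only [pow_succ', mul_assoc]
        exact setIntegral_inter_shell_le (measurableSet_absIccPi a b) (by positivity) hM
          (hf.mono_set inter_subset_left) fun θ hθ => hbound θ hθ.1
    _ = n * (4 ^ d * M) := by simp

theorem le_setIntegral_absIccPi (ha : 0 < a) {m : ℝ} (hm : 0 ≤ m)
    (hf : IntegrableOn f (absIccPi a b)) (hbound : ∀ θ ∈ absIccPi a b, m / ‖θ‖ ^ d ≤ f θ)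
    {n : ℕ} (hn : 2 ^ n * a ≤ b) : n * (m / 2 ^ d) ≤ ∫ θ in absIccPi a b, f θ := by
  have hshell : ∀ k ∈ Finset.range n, m / 2 ^ d ≤
      ∫ θ in absIccPi a b ∩ (ball 0 (2 ^ (k + 1) * a) \ ball 0 (2 ^ k * a)), f θ := by
    intro k hk
    have hρ : 0 < 2 ^ k * a := by positivity
    have hρb : 2 * (2 ^ k * a) ≤ b := by
      rw [← mul_assoc, ← pow_succ']
      exact (monotone_two_pow_mul ha.le (Finset.mem_range.1 hk)).trans hn
    rw [pow_succ', mul_assoc]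
    refine le_trans ?_ (le_setIntegral_inter_shell (measurableSet_absIccPi a b) hρ hm
      (hf.mono_set inter_subset_left) fun θ hθ => hbound θ hθ.1)
    calc m / 2 ^ d = m / (2 * (2 ^ k * a)) ^ d * (2 ^ k * a) ^ d := by
          rw [mul_pow]; field_simp
      _ ≤ _ := by
          gcongr
          exact pow_le_volume_real_absIccPi_inter_shell hρ
            (le_mul_of_one_le_left ha.le (one_le_pow₀ one_le_two)) hρb
  have hnonneg : 0 ≤ᵐ[volume.restrict (absIccPi a b)] f :=
    ae_restrict_of_forall_mem (measurableSet_absIccPi a b) fun θ hθ =>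
      (div_nonneg hm (by positivity)).trans (hbound θ hθ)
  calc (n : ℝ) * (m / 2 ^ d) = ∑ _k ∈ Finset.range n, m / 2 ^ d := by simp
    _ ≤ _ := Finset.sum_le_sum hshell
    _ = ∫ θ in absIccPi a b ∩ (ball 0 (2 ^ n * a) \ ball 0 (2 ^ 0 * a)), f θ :=
        (setIntegral_inter_ball_diff_ball_eq_sum (measurableSet_absIccPi a b) hf 0
          (monotone_two_pow_mul ha.le) n).symm
    _ ≤ ∫ θ in absIccPi a b, f θ :=
        setIntegral_mono_set hf hnonneg inter_subset_left.eventuallyLE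

end DyadicBounds

section DyadicCount

theorem lt_two_pow_log_mul_two_mul_div {b : ℝ} (hb : 0 < b) {L : ℕ} (hL : L ≠ 0) :
    b < 2 ^ Nat.log 2 L * (2 * b / L) := by
  have hL' : (0 : ℝ) < L := by exact_mod_cast Nat.pos_of_ne_zero hL
  have hpow : (L : ℝ) < 2 ^ (Nat.log 2 L + 1) := by
    exact_mod_cast Nat.lt_pow_succ_log_self one_lt_two L
  rw [mul_div_assoc', lt_div_iff₀ hL', ← mul_assoc, ← pow_succ, mul_comm b]
  exact mul_lt_mul_of_pos_right hpow hb

theorem two_pow_log_sub_two_mul_four_mul_div_le {b : ℝ} (hb : 0 ≤ b) {L : ℕ} (hL : 4 ≤ L) :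
    2 ^ (Nat.log 2 L - 2) * (4 * b / L) ≤ b := by
  have hL' : (0 : ℝ) < L := by positivity
  have hK : 2 ≤ Nat.log 2 L := Nat.le_log_of_pow_le one_lt_two hL
  have hpow : (2 : ℝ) ^ Nat.log 2 L ≤ L := by exact_mod_cast Nat.pow_log_le_self 2 (by omega)
  rw [mul_div_assoc', div_le_iff₀ hL', ← mul_assoc,
    show (4 : ℝ) = 2 ^ 2 by norm_num, ← pow_add, Nat.sub_add_cancel hK, mul_comm b]
  exact mul_le_mul_of_nonneg_right hpow hb

theorem natLog_two_le_two_mul_log (L : ℕ) : (Nat.log 2 L : ℝ) ≤ 2 * log L := by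
  rcases Nat.eq_zero_or_pos L with rfl | hL
  · simp
  have hpow : (2 : ℝ) ^ Nat.log 2 L ≤ L := by exact_mod_cast Nat.pow_log_le_self 2 hL.ne'
  have hlog := log_le_log (by positivity) hpow
  rw [log_pow] at hlog
  nlinarith [log_two_gt_d9]

theorem log_le_two_mul_natLog_two_sub_two {L : ℕ} (hL : 32 ≤ L) :
    log L ≤ 2 * ((Nat.log 2 L - 2 : ℕ) : ℝ) := by
  have hK : 5 ≤ Nat.log 2 L := Nat.le_log_of_pow_le one_lt_two hL
  have hpow : (L : ℝ) < 2 ^ (Nat.log 2 L + 1) := by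
    exact_mod_cast Nat.lt_pow_succ_log_self one_lt_two L
  have hlog := log_lt_log (by positivity) hpow
  rw [log_pow] at hlog
  have hK' : (5 : ℝ) ≤ Nat.log 2 L := by exact_mod_cast hK
  push_cast [Nat.cast_sub (hK.trans' (by norm_num) : 2 ≤ Nat.log 2 L)] at hlog ⊢
  nlinarith [log_two_lt_d9, log_two_gt_d9]

end DyadicCount

/-- In the critical case `r = d`, both `S(4π/L)` and `S(2π/L)` scale as `(log L)/β^{d/2}`. -/
theorem stmt_8 (d : ℕ) (hd : 1 ≤ d) (c C : ℝ) (hc : 0 < c) (hcC : c ≤ C) :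
    ∃ c' C' : ℝ, 0 < c' ∧ 0 < C' ∧ ∃ L0 : ℕ, ∀ β : ℝ, 0 < β →
      ∀ p : (Fin d → ℝ) → ℝ, Measurable p →
      (∀ θ : Fin d → ℝ, θ ≠ 0 → (∀ i, |θ i| ≤ Real.pi) →
        c / (β ^ ((d : ℝ) / 2) * Real.sqrt (∑ i, (θ i) ^ 2) ^ d) ≤ p θ ∧
        p θ ≤ C / (β ^ ((d : ℝ) / 2) * Real.sqrt (∑ i, (θ i) ^ 2) ^ d)) →
      ∀ L : ℕ, L0 ≤ L →
        c' * Real.log L / β ^ ((d : ℝ) / 2) ≤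
          (∫ θ in {θ : Fin d → ℝ | ∀ i, 4 * Real.pi / L ≤ |θ i| ∧ |θ i| ≤ Real.pi}, p θ) ∧
        (∫ θ in {θ : Fin d → ℝ | ∀ i, 4 * Real.pi / L ≤ |θ i| ∧ |θ i| ≤ Real.pi}, p θ) ≤
          (∫ θ in {θ : Fin d → ℝ | ∀ i, 2 * Real.pi / L ≤ |θ i| ∧ |θ i| ≤ Real.pi}, p θ) ∧
        (∫ θ in {θ : Fin d → ℝ | ∀ i, 2 * Real.pi / L ≤ |θ i| ∧ |θ i| ≤ Real.pi}, p θ) ≤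
          C' * Real.log L / β ^ ((d : ℝ) / 2) := by
  have : NeZero d := ⟨by omega⟩
  have hC : 0 < C := hc.trans_le hcC
  refine ⟨c / (2 * (2 * √d) ^ d), 2 * 4 ^ d * C, by positivity, by positivity, 32, ?_⟩
  intro β hβ p hp hpβ L hL
  set B := β ^ ((d : ℝ) / 2)
  have hB : 0 < B := rpow_pos_of_pos hβ _
  simp only [← div_div] at hpβ
  have hbounds : ∀ a > 0, ∀ θ ∈ absIccPi a π,
      c / B / √d ^ d / ‖θ‖ ^ d ≤ p θ ∧ p θ ≤ C / B / ‖θ‖ ^ d := fun a ha θ hθ =>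
    le_and_le_div_norm_pow_of_mem_absIccPi (by positivity) (by positivity) hpβ ha hθ
  have hint : ∀ a > 0, IntegrableOn p (absIccPi a π) := fun a ha =>
    integrableOn_absIccPi hp ha (by positivity) (by positivity) (hbounds a ha)
  refine ⟨?_, ?_, ?_⟩
  · calc c / (2 * (2 * √d) ^ d) * log L / B
        ≤ c / (2 * (2 * √d) ^ d) * (2 * (Nat.log 2 L - 2 : ℕ)) / B := by
          gcongr
          exact log_le_two_mul_natLog_two_sub_two hL
      _ = (Nat.log 2 L - 2 : ℕ) * (c / B / √d ^ d / 2 ^ d) := by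
          rw [mul_pow]; field_simp
      _ ≤ _ := le_setIntegral_absIccPi (by positivity) (by positivity) (hint _ (by positivity))
          (fun θ hθ => (hbounds _ (by positivity) θ hθ).1)
          (two_pow_log_sub_two_mul_four_mul_div_le pi_pos.le (by omega))
  · exact setIntegral_absIccPi_le_of_le (hint _ (by positivity))
      (fun θ hθ => (div_nonneg (by positivity) (by positivity)).trans
        (hbounds _ (by positivity) θ hθ).1)
      (by gcongr; norm_num)
  · calc _ ≤ Nat.log 2 L * (4 ^ d * (C / B)) :=
          setIntegral_absIccPi_le (by positivity) (by positivity) (hint _ (by positivity))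
            (fun θ hθ => (hbounds _ (by positivity) θ hθ).2)
            (lt_two_pow_log_mul_two_mul_div pi_pos (by omega))
      _ ≤ 2 * log L * (4 ^ d * (C / B)) :=
          mul_le_mul_of_nonneg_right (natLog_two_le_two_mul_log L) (by positivity)
      _ = 2 * 4 ^ d * C * log L / B := by ring
end

section
/- Consider the 2×2 matrix Â(θ) = [[â(θ), b̂(θ)],[1, f̂(θ)]] where â, b̂, f̂ are Z-transforms of finitely supported arrays on Z, with b̂ and f̂ having zero-sum arrays (b̄_0 = f̄_0 = 0), and f̂ real-valued. If the first-order Maclaurin coefficient of b̂ is nonzero (b̄_1 ≠ 0) and â(0) = 0 (no absolute feedback in A), then there exists θ₁ ≠ 0 arbitrarily close to 0 such that Â(θ₁) is not Hurwitz stable. -/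
/-!
The eigenvalues of `!![A, B; 1, F]` are `(A + F ± s) / 2` with `s² = (A - F)² + 4B`, and
`2 (Re s)² = ‖s²‖ + Re s²`. Along the transforms, `A(0) = B(0) = F(0) = 0` and all first
derivatives are purely imaginary (the arrays are real), so `Re (A + F) = o(θ)` while the
discriminant is `4θB'(0) + o(θ)` with `B'(0) = -i b̄₁ ≠ 0`. Hence `(Re s)² ≥ 2|θ||b̄₁| - o(θ)`
dominates `(Re (A + F))² = o(θ²)`, and the eigenvalue `(A + F + s) / 2` with `Re s ≥ 0` has
nonnegative real part for all small `θ`.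
-/

open Complex Filter Function Topology Asymptotics

noncomputable def zTransform (g : ℤ → ℝ) (θ : ℝ) : ℂ :=
  ∑ᶠ k : ℤ, (g k : ℂ) * exp (-I * θ * k)

section zTransform

variable {g : ℤ → ℝ}

theorem zTransform_eq_sum (hg : (support g).Finite) (θ : ℝ) :
    zTransform g θ = ∑ k ∈ hg.toFinset, (g k : ℂ) * exp (-I * θ * k) :=
  finsum_eq_sum_of_support_subset _ fun k hk => by
    simpa using left_ne_zero_of_mul hk

theorem zTransform_zero (hg : (support g).Finite) : zTransform g 0 = ∑ᶠ k, g k := by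
  rw [zTransform_eq_sum hg, finsum_eq_sum_of_support_subset (s := hg.toFinset) g (by simp)]
  simp

theorem hasDerivAt_zTransform_zero (hg : (support g).Finite) :
    HasDerivAt (zTransform g) (-I * ∑ᶠ k : ℤ, (k : ℝ) * g k) 0 := by
  rw [funext (zTransform_eq_sum hg),
    finsum_eq_sum_of_support_subset (s := hg.toFinset) _
      ((support_mul_subset_right _ _).trans (by simp))]
  have hterm (k : ℤ) :
      HasDerivAt (fun θ : ℝ => (g k : ℂ) * exp (-I * θ * k)) (g k * (-I * k)) 0 := by
    simpa using ((((hasDerivAt_id (0 : ℝ)).ofReal_comp.const_mul (-I)).mul_const (k : ℂ)).cexp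
      ).const_mul (g k : ℂ)
  refine (HasDerivAt.fun_sum fun k _ => hterm k).congr_deriv ?_
  push_cast
  rw [Finset.mul_sum]
  exact Finset.sum_congr rfl fun k _ => by ring

end zTransform

theorem mem_spectrum_fin_two_of_eq {A B F μ : ℂ} (h : (μ - A) * (μ - F) - B = 0) :
    μ ∈ spectrum ℂ !![A, B; 1, F] := by
  rw [spectrum.mem_iff, Matrix.isUnit_iff_isUnit_det, isUnit_iff_ne_zero, not_not,
    Matrix.det_fin_two]
  simp [Matrix.algebraMap_eq_diagonal]
  linear_combination h

theorem Complex.two_mul_re_sq (s : ℂ) : 2 * s.re ^ 2 = ‖s * s‖ + (s * s).re := by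
  rw [norm_mul, ← sq, Complex.sq_norm, Complex.normSq_apply, Complex.mul_re]
  ring

theorem Complex.norm_sub_two_mul_norm_le_norm_add_re {z w : ℂ} (hz : z.re = 0) :
    ‖z‖ - 2 * ‖w‖ ≤ ‖z + w‖ + (z + w).re := by
  have hnorm : ‖z‖ ≤ ‖z + w‖ + ‖w‖ := by simpa using norm_sub_le (z + w) w
  have hre : -‖w‖ ≤ (z + w).re := by
    rw [add_re, hz, zero_add]
    exact (neg_le_neg (abs_re_le_norm w)).trans (neg_abs_le w.re)
  linarith

theorem exists_mem_spectrum_re_nonneg_of_sq_le (A B F : ℂ)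
    (h : 2 * (A + F).re ^ 2 ≤ ‖(A - F) ^ 2 + 4 * B‖ + ((A - F) ^ 2 + 4 * B).re) :
    ∃ μ ∈ spectrum ℂ !![A, B; 1, F], 0 ≤ μ.re := by
  obtain ⟨s, hs⟩ := IsAlgClosed.exists_eq_mul_self ((A - F) ^ 2 + 4 * B)
  wlog hs0 : 0 ≤ s.re generalizing s
  · exact this (-s) (by rw [hs]; ring) (by simp only [neg_re]; linarith)
  refine ⟨(A + F + s) / 2, mem_spectrum_fin_two_of_eq ?_, ?_⟩
  · linear_combination (-1 / 4 : ℂ) * hs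
  · have hre := s.two_mul_re_sq
    rw [← hs] at hre
    have hAFs := (abs_le_of_sq_le_sq' (a := (A + F).re) (by linarith) hs0).1
    simp only [div_ofNat_re, add_re] at hAFs ⊢
    linarith

theorem eventually_exists_mem_spectrum_re_nonneg {A B F : ℝ → ℂ} {A' B' F' : ℂ}
    (hA : HasDerivAt A A' 0) (hB : HasDerivAt B B' 0) (hF : HasDerivAt F F' 0)
    (hA0 : A 0 = 0) (hB0 : B 0 = 0) (hF0 : F 0 = 0)
    (hAF' : A'.re + F'.re = 0) (hB're : B'.re = 0) (hB' : B' ≠ 0) :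
    ∀ᶠ θ in 𝓝 0, ∃ μ ∈ spectrum ℂ !![A θ, B θ; 1, F θ], 0 ≤ μ.re := by
  set D : ℝ → ℂ := fun θ => (A θ - F θ) ^ 2 + 4 * B θ
  have hD : HasDerivAt D (4 * B') 0 := by
    simpa [hA0, hF0] using ((hA.fun_sub hF).fun_pow 2).fun_add (hB.const_mul 4)
  have hT : (fun θ => (A θ + F θ).re) =o[𝓝 0] fun θ => θ := by
    refine (reCLM.isBigO_comp _ _).trans_isLittleO
      (hasDerivAt_iff_isLittleO_nhds_zero.mp (hA.fun_add hF)) |>.congr_left fun θ => ?_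
    simp only [zero_add, hA0, hF0, reCLM_apply, sub_re, add_re, real_smul, mul_re, ofReal_re,
      ofReal_im, zero_re]
    linear_combination -θ * hAF'
  have hE : (fun θ => D θ - θ • (4 * B')) =o[𝓝 0] fun θ => θ := by
    simpa [D, hA0, hF0, hB0] using hasDerivAt_iff_isLittleO_nhds_zero.mp hD
  have hsmall : (fun θ => 2 * (A θ + F θ).re ^ 2 + 2 * ‖D θ - θ • (4 * B')‖) =o[𝓝 0]
      fun θ => θ :=
    (((hT.pow two_pos).trans (isLittleO_pow_id one_lt_two)).const_mul_left 2).add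
      (hE.norm_left.const_mul_left 2)
  filter_upwards [hsmall.def (c := 4 * ‖B'‖) (by positivity)] with θ hθ
  refine exists_mem_spectrum_re_nonneg_of_sq_le _ _ _ ?_
  have hdisc := norm_sub_two_mul_norm_le_norm_add_re (z := θ • (4 * B'))
    (w := D θ - θ • (4 * B')) (by simp [hB're])
  rw [add_sub_cancel, norm_smul, norm_mul, RCLike.norm_ofNat] at hdisc
  rw [Real.norm_of_nonneg (by positivity)] at hθ
  linarith

theorem stmt_11_general (a b f : ℤ → ℝ)
    (ha : (Function.support a).Finite) (hb : (Function.support b).Finite)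
    (hf : (Function.support f).Finite)
    (hbsum : ∑ᶠ k : ℤ, b k = 0) (hfsum : ∑ᶠ k : ℤ, f k = 0)
    (hb1 : ∑ᶠ k : ℤ, (k : ℝ) * b k ≠ 0)
    (ha0 : ∑ᶠ k : ℤ, a k = 0) :
    ∀ ε : ℝ, 0 < ε → ∃ θ : ℝ, θ ≠ 0 ∧ |θ| < ε ∧
      ∃ μ ∈ spectrum ℂ
        (!![∑ᶠ k : ℤ, (a k : ℂ) * Complex.exp (-Complex.I * (θ : ℂ) * (k : ℂ)),
            ∑ᶠ k : ℤ, (b k : ℂ) * Complex.exp (-Complex.I * (θ : ℂ) * (k : ℂ));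
            1,
            ∑ᶠ k : ℤ, (f k : ℂ) * Complex.exp (-Complex.I * (θ : ℂ) * (k : ℂ))]),
        0 ≤ μ.re := by
  intro ε hε
  have hunstable : ∀ᶠ θ in 𝓝 0,
      ∃ μ ∈ spectrum ℂ !![zTransform a θ, zTransform b θ; 1, zTransform f θ], 0 ≤ μ.re :=
    eventually_exists_mem_spectrum_re_nonneg (hasDerivAt_zTransform_zero ha)
      (hasDerivAt_zTransform_zero hb) (hasDerivAt_zTransform_zero hf)
      (by simp [zTransform_zero ha, ha0]) (by simp [zTransform_zero hb, hbsum])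
      (by simp [zTransform_zero hf, hfsum]) (by simp) (by simp) (by simpa using hb1)
  obtain ⟨θ, ⟨hθμ, hθε⟩, hθ0⟩ :=
    (((hunstable.and (Metric.ball_mem_nhds 0 hε)).filter_mono nhdsWithin_le_nhds).and
      (self_mem_nhdsWithin (s := {0}ᶜ))).exists
  exact ⟨θ, hθ0, by simpa using hθε, hθμ⟩

/-- Necessity direction of the admissibility theorem for dynamic consensus feedback:
if the array `b` has nonzero first Maclaurin coefficient (`Σ k b_k ≠ 0`) and `A` has no
absolute feedback (`â(0) = Σ a_k = 0`), then arbitrarily close to `θ = 0` there is a `θ ≠ 0`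
at which the closed-loop matrix `[[â(θ), b̂(θ)],[1, f̂(θ)]]` is not Hurwitz stable. -/
theorem stmt_11 (a b f : ℤ → ℝ)
    (ha : (Function.support a).Finite) (hb : (Function.support b).Finite)
    (hf : (Function.support f).Finite)
    (hbsum : ∑ᶠ k : ℤ, b k = 0) (hfsum : ∑ᶠ k : ℤ, f k = 0)
    (hfreal : ∀ θ : ℝ,
      (∑ᶠ k : ℤ, (f k : ℂ) * Complex.exp (-Complex.I * (θ : ℂ) * (k : ℂ))).im = 0)
    (hb1 : ∑ᶠ k : ℤ, (k : ℝ) * b k ≠ 0)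
    (ha0 : ∑ᶠ k : ℤ, a k = 0) :
    ∀ ε : ℝ, 0 < ε → ∃ θ : ℝ, θ ≠ 0 ∧ |θ| < ε ∧
      ∃ μ ∈ spectrum ℂ
        (!![∑ᶠ k : ℤ, (a k : ℂ) * Complex.exp (-Complex.I * (θ : ℂ) * (k : ℂ)),
            ∑ᶠ k : ℤ, (b k : ℂ) * Complex.exp (-Complex.I * (θ : ℂ) * (k : ℂ));
            1,
            ∑ᶠ k : ℤ, (f k : ℂ) * Complex.exp (-Complex.I * (θ : ℂ) * (k : ℂ))]),
        0 ≤ μ.re :=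
  stmt_11_general a b f ha hb hf hbsum hfsum hb1 ha0
end

section
/- Consider the cubic characteristic polynomial p(λ,θ) = λ³ - (â+ĝ)λ² + (âĝ - f̂ - ĉ)λ + âf̂ - b̂, where â, b̂, ĉ, f̂, ĝ are real-valued, vanish at θ=0 and have vanishing linear Maclaurin coefficients (symmetric relative feedback: each symbol ≈ coefficient·θ² near 0), with b̂ having a nonzero quadratic coefficient b̄₂ ≠ 0 and â(0) = 0. Then for all θ ≠ 0 sufficiently close to 0, p(·,θ) has a root with nonnegative real part. -/
open Asymptotics


open Asymptotics Polynomial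

lemma cubic_exists_root (A B C : ℂ) : ∃ z : ℂ, z^3 + A*z^2 + B*z + C = 0 := by
  obtain ⟨z, hz⟩ := IsAlgClosed.exists_root
    (X^3 + Polynomial.C A * X^2 + Polynomial.C B * X + Polynomial.C C)
    (by
      have h : (X^3 + Polynomial.C A * X^2 + Polynomial.C B * X + Polynomial.C C).degree = 3 := by
        compute_degree!
      rw [h]; norm_num)
  refine ⟨z, ?_⟩
  simpa [Polynomial.IsRoot] using hz

lemma cubic_factor (A B C : ℂ) :
    ∃ z1 z2 z3 : ℂ, (∀ z : ℂ, z^3 + A*z^2 + B*z + C = (z - z1)*(z - z2)*(z - z3)) ∧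
      z1 + z2 + z3 = -A ∧ z1*z2 + z1*z3 + z2*z3 = B ∧ z1*z2*z3 = -C := by
  obtain ⟨z1, h1⟩ := cubic_exists_root A B C
  obtain ⟨s, hs⟩ := IsAlgClosed.exists_pow_nat_eq
    ((A+z1)^2 - 4*(B + z1*(A+z1))) (show 0 < 2 by norm_num)
  refine ⟨z1, (-(A+z1)+s)/2, (-(A+z1)-s)/2, ?_, by ring, by linear_combination (-1/4 : ℂ) * hs,
    by linear_combination (-z1/4 : ℂ) * hs + h1⟩
  intro z
  linear_combination h1 + ((z - z1)/4) * hs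

lemma keyD2 (x1 x2 x3 y1 y2 y3 : ℝ) (h1 : x1 < 0) (h2 : x2 < 0) (h3 : x3 < 0)
    (hsum : y1 + y2 + y3 = 0) :
    (x1+x2+x3) * (x1*x2 + x1*x3 + x2*x3 - y1*y2 - y1*y3 - y2*y3) <
      x1*x2*x3 - x1*y2*y3 - x2*y1*y3 - x3*y1*y2 := by
  have key : (x1*x2*x3 - x1*y2*y3 - x2*y1*y3 - x3*y1*y2)
      - (x1+x2+x3) * (x1*x2 + x1*x3 + x2*x3 - y1*y2 - y1*y3 - y2*y3)
      = -((x1+x2)*((x2+x3)*(x3+x1))) + (-x1)*y1^2 + (-x2)*y2^2 + (-x3)*y3^2 := by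
    linear_combination (x1*y1 + x2*y2 + x3*y3) * hsum
  have hp : 0 < (x2+x3)*(x3+x1) := mul_pos_of_neg_of_neg (by linarith) (by linarith)
  have hq : (x1+x2)*((x2+x3)*(x3+x1)) < 0 := mul_neg_of_neg_of_pos (by linarith) hp
  have t1 : 0 ≤ (-x1)*y1^2 := mul_nonneg (by linarith) (sq_nonneg _)
  have t2 : 0 ≤ (-x2)*y2^2 := mul_nonneg (by linarith) (sq_nonneg _)
  have t3 : 0 ≤ (-x3)*y3^2 := mul_nonneg (by linarith) (sq_nonneg _)
  linarith

lemma cubic_real_root_nonneg (A B C : ℝ) (hC : C < 0) :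
    ∃ r : ℝ, 0 ≤ r ∧ r^3 + A*r^2 + B*r + C = 0 := by
  set f : ℝ → ℝ := fun x => x^3 + A*x^2 + B*x + C with hf
  set M : ℝ := 1 + |A| + |B| + |C| with hM
  have hM1 : 1 ≤ M := by
    have := abs_nonneg A; have := abs_nonneg B; have := abs_nonneg C; linarith
  have hfM : 0 < f M := by
    have hA' : -|A| ≤ A := neg_abs_le A
    have hB' : -|B| ≤ B := neg_abs_le B
    have hC' : -|C| ≤ C := neg_abs_le C
    have h2 : (1:ℝ) ≤ M^2 := by nlinarith
    have hMM : M ≤ M^2 := by nlinarith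
    have hsum : |A| + |B| + |C| = M - 1 := by rw [hM]; ring
    have p1 : (-|A|)*M^2 ≤ A*M^2 := mul_le_mul_of_nonneg_right hA' (sq_nonneg M)
    have p2 : (-|B|)*M^2 ≤ B*M := by
      nlinarith [mul_le_mul_of_nonneg_left hMM (abs_nonneg B),
        mul_le_mul_of_nonneg_right hB' (le_trans zero_le_one hM1)]
    have p3 : (-|C|)*M^2 ≤ C := by
      nlinarith [mul_le_mul_of_nonneg_left h2 (abs_nonneg C)]
    have hsum2 : (|A|+|B|+|C|)*M^2 = (M-1)*M^2 := by rw [hsum]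
    show 0 < M^3 + A*M^2 + B*M + C
    nlinarith [p1, p2, p3, hsum2, h2]
  have hcont : ContinuousOn f (Set.Icc 0 M) := by fun_prop
  have hsub := intermediate_value_Icc (by linarith : (0:ℝ) ≤ M) hcont
  have h0 : (0:ℝ) ∈ Set.Icc (f 0) (f M) := by
    constructor
    · show f 0 ≤ 0
      simp only [hf]; norm_num; linarith
    · exact le_of_lt hfM
  obtain ⟨r, hr, hfr⟩ := hsub h0
  exact ⟨r, hr.1, hfr⟩


open Asymptotics

lemma abs_bnd (u v t Kk : ℝ) (ht : 0 ≤ t) (h : |u - v*t| ≤ t) (hk : |v| + 1 ≤ Kk) :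
    |u| ≤ Kk * t := by
  have h2 : |u| ≤ |u - v*t| + |v*t| := by
    calc |u| = |(u - v*t) + v*t| := by ring_nf
    _ ≤ |u - v*t| + |v*t| := abs_add_le _ _
  rw [abs_mul, abs_of_nonneg ht] at h2
  nlinarith [abs_nonneg (u - v*t), abs_nonneg v]


set_option maxHeartbeats 1000000 in
/-- Necessity direction for the vehicular formation with dynamic relative feedback:
if all (real, symmetric, relative) Fourier symbols behave like `coeff·θ²` near `θ = 0`,
the quadratic coefficient of `b̂` is nonzero and `â(0) = 0`, then for all `θ ≠ 0`
sufficiently close to `0` the closed-loop characteristic cubic has a root with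
nonnegative real part. -/
theorem stmt_13 (ahat bhat chat fhat ghat : ℝ → ℝ) (a2 b2 c2 f2 g2 : ℝ)
    (hA : (fun θ => ahat θ - a2 * θ ^ 2) =o[nhds 0] fun θ : ℝ => θ ^ 2)
    (hB : (fun θ => bhat θ - b2 * θ ^ 2) =o[nhds 0] fun θ : ℝ => θ ^ 2)
    (hC : (fun θ => chat θ - c2 * θ ^ 2) =o[nhds 0] fun θ : ℝ => θ ^ 2)
    (hF : (fun θ => fhat θ - f2 * θ ^ 2) =o[nhds 0] fun θ : ℝ => θ ^ 2)
    (hG : (fun θ => ghat θ - g2 * θ ^ 2) =o[nhds 0] fun θ : ℝ => θ ^ 2)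
    (ha0 : ahat 0 = 0) (hb2 : b2 ≠ 0) :
    ∃ δ : ℝ, 0 < δ ∧ ∀ θ : ℝ, θ ≠ 0 → |θ| < δ →
      ∃ lam : ℂ,
        lam ^ 3 - ((ahat θ + ghat θ : ℝ) : ℂ) * lam ^ 2 +
            ((ahat θ * ghat θ - fhat θ - chat θ : ℝ) : ℂ) * lam +
            ((ahat θ * fhat θ - bhat θ : ℝ) : ℂ) = 0 ∧
        0 ≤ lam.re := by
  set K : ℝ := |a2| + |b2| + |c2| + |f2| + |g2| + 1 with hKdef
  have hK1 : 1 ≤ K := by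
    have := abs_nonneg a2; have := abs_nonneg b2; have := abs_nonneg c2
    have := abs_nonneg f2; have := abs_nonneg g2
    simp only [hKdef]; linarith
  have hK0 : 0 < K := by linarith
  have hb2' : 0 < |b2| := abs_pos.mpr hb2
  set M : ℝ := 2*K*(K^2 + 2*K) + K^2 + 1 with hMdef
  have hM0 : 0 < M := by positivity
  have hKM : K^2 ≤ M := by nlinarith
  set c0 : ℝ := 3*|b2|/4 with hc0def
  have hc0 : 0 < c0 := by positivity
  clear_value K M c0
  have hev : ∀ᶠ θ in nhds (0:ℝ), |ahat θ| ≤ K*θ^2 ∧ |ghat θ| ≤ K*θ^2 ∧ |fhat θ| ≤ K*θ^2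
      ∧ |chat θ| ≤ K*θ^2 ∧ |bhat θ - b2*θ^2| ≤ (|b2|/4)*θ^2 := by
    filter_upwards [hA.def one_pos, hG.def one_pos, hF.def one_pos, hC.def one_pos,
      hB.def (show (0:ℝ) < |b2|/4 by positivity)] with θ h1 h2 h3 h4 h5
    simp only [Real.norm_eq_abs, one_mul, abs_of_nonneg (sq_nonneg θ)] at h1 h2 h3 h4 h5
    refine ⟨?_, ?_, ?_, ?_, ?_⟩
    · exact abs_bnd _ _ _ _ (sq_nonneg θ) h1 (by simp only [hKdef]; linarith [abs_nonneg b2, abs_nonneg c2, abs_nonneg f2, abs_nonneg g2])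
    · exact abs_bnd _ _ _ _ (sq_nonneg θ) h2 (by simp only [hKdef]; linarith [abs_nonneg a2, abs_nonneg b2, abs_nonneg c2, abs_nonneg f2])
    · exact abs_bnd _ _ _ _ (sq_nonneg θ) h3 (by simp only [hKdef]; linarith [abs_nonneg a2, abs_nonneg b2, abs_nonneg c2, abs_nonneg g2])
    · exact abs_bnd _ _ _ _ (sq_nonneg θ) h4 (by simp only [hKdef]; linarith [abs_nonneg a2, abs_nonneg b2, abs_nonneg f2, abs_nonneg g2])
    · calc |bhat θ - b2*θ^2| ≤ |b2|/4 * θ^2 := h5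
      _ = (|b2|/4)*θ^2 := by ring
  rw [Metric.eventually_nhds_iff] at hev
  obtain ⟨δ1, hδ1, hevd⟩ := hev
  refine ⟨min δ1 (min 1 (Real.sqrt (c0/M))), lt_min hδ1 (lt_min one_pos
    (Real.sqrt_pos.mpr (div_pos hc0 hM0))), ?_⟩
  intro θ hθ0 hθ
  have hθ1 : |θ| < δ1 := lt_of_lt_of_le hθ (min_le_left _ _)
  have hθ2 : |θ| ≤ 1 := le_of_lt (lt_of_lt_of_le hθ (le_trans (min_le_right _ _) (min_le_left _ _)))
  have hθ3 : |θ| < Real.sqrt (c0/M) :=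
    lt_of_lt_of_le hθ (le_trans (min_le_right _ _) (min_le_right _ _))
  have ht0 : 0 < θ^2 := by positivity
  have htM : θ^2 * M < c0 := by
    have hs : Real.sqrt (c0/M) ^ 2 = c0/M := Real.sq_sqrt (div_pos hc0 hM0).le
    have h1 : θ^2 < c0/M := by
      calc θ^2 = |θ|^2 := (sq_abs θ).symm
      _ < Real.sqrt (c0/M)^2 := by
          nlinarith [abs_nonneg θ, Real.sqrt_nonneg (c0/M)]
      _ = c0/M := hs
    calc θ^2 * M < (c0/M) * M := mul_lt_mul_of_pos_right h1 hM0
    _ = c0 := div_mul_cancel₀ c0 (ne_of_gt hM0)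
  have ht1 : θ^2 ≤ 1 := by
    rw [← sq_abs]
    nlinarith [abs_nonneg θ, mul_le_mul hθ2 hθ2 (abs_nonneg θ) zero_le_one]
  have hKt2 : (0:ℝ) ≤ K*θ^2 := (mul_pos hK0 ht0).le
  obtain ⟨ea, eg, ef, ec, eb⟩ := hevd (show dist θ 0 < δ1 by rw [Real.dist_eq, sub_zero]; exact hθ1)
  set Av : ℝ := -(ahat θ + ghat θ) with hAv
  set Bv : ℝ := ahat θ * ghat θ - fhat θ - chat θ with hBv
  set Cv : ℝ := ahat θ * fhat θ - bhat θ with hCv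
  have ebl := abs_le.mp eb
  have hafle : |ahat θ * fhat θ| ≤ K*θ^2*(K*θ^2) := by
    rw [abs_mul]
    exact mul_le_mul ea ef (abs_nonneg _) hKt2
  have hafl := abs_le.mp hafle
  -- bound |Av| and |Bv|
  have hAb : |Av| ≤ 2*K*θ^2 := by
    rw [hAv, abs_neg]
    calc |ahat θ + ghat θ| ≤ |ahat θ| + |ghat θ| := abs_add_le _ _
    _ ≤ K*θ^2 + K*θ^2 := add_le_add ea eg
    _ = 2*K*θ^2 := by ring
  have hagle : |ahat θ * ghat θ| ≤ K*θ^2*(K*θ^2) := by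
    rw [abs_mul]
    exact mul_le_mul ea eg (abs_nonneg _) hKt2
  have hBb : |Bv| ≤ (K^2 + 2*K)*θ^2 := by
    rw [hBv]
    calc |ahat θ * ghat θ - fhat θ - chat θ|
        = |ahat θ * ghat θ + (-(fhat θ)) + (-(chat θ))| := by ring_nf
    _ ≤ |ahat θ * ghat θ + (-(fhat θ))| + |(-(chat θ))| := abs_add_le _ _
    _ ≤ |ahat θ * ghat θ| + |(-(fhat θ))| + |(-(chat θ))| := by
        linarith [abs_add_le (ahat θ * ghat θ) (-(fhat θ))]
    _ = |ahat θ * ghat θ| + |fhat θ| + |chat θ| := by rw [abs_neg, abs_neg]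
    _ ≤ K*θ^2*(K*θ^2) + K*θ^2 + K*θ^2 := by linarith [hagle]
    _ ≤ (K^2 + 2*K)*θ^2 := by nlinarith
  rcases hb2.lt_or_gt with hneg | hpos
  · -- b2 < 0 : contradiction via Routh–Hurwitz violation
    by_contra hcon
    push_neg at hcon
    obtain ⟨z1, z2, z3, hfac, he1, he2, he3⟩ := cubic_factor (Av : ℂ) (Bv : ℂ) (Cv : ℂ)
    have hcast : ((ahat θ + ghat θ : ℝ) : ℂ) = -((Av:ℝ):ℂ) := by
      rw [hAv]; push_cast; ring
    have hroot : ∀ z : ℂ, z^3 + (Av:ℂ)*z^2 + (Bv:ℂ)*z + (Cv:ℂ) = 0 → z.re < 0 := by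
      intro z hz
      apply hcon z
      rw [hcast]
      linear_combination hz
    have hr1 : z1.re < 0 := by
      apply hroot; have h := hfac z1
      rw [sub_self, zero_mul, zero_mul] at h; exact h
    have hr2 : z2.re < 0 := by
      apply hroot; have h := hfac z2
      rw [sub_self, mul_zero, zero_mul] at h; exact h
    have hr3 : z3.re < 0 := by
      apply hroot; have h := hfac z3
      rw [sub_self, mul_zero] at h; exact h
    have hre1 : z1.re + z2.re + z3.re = -Av := by
      have := congrArg Complex.re he1; simpa using this
    have him1 : z1.im + z2.im + z3.im = 0 := by
      have := congrArg Complex.im he1; simpa using this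
    have hre2 : z1.re*z2.re + z1.re*z3.re + z2.re*z3.re
        - z1.im*z2.im - z1.im*z3.im - z2.im*z3.im = Bv := by
      have := congrArg Complex.re he2
      simp [Complex.mul_re] at this
      linear_combination this
    have hre3 : z1.re*z2.re*z3.re - z1.re*z2.im*z3.im - z2.re*z1.im*z3.im
        - z3.re*z1.im*z2.im = -Cv := by
      have := congrArg Complex.re he3
      simp [Complex.mul_re, Complex.mul_im] at this
      linear_combination this
    have hkey := keyD2 z1.re z2.re z3.re z1.im z2.im z3.im hr1 hr2 hr3 him1
    have hAB : (-Av) * Bv < -Cv := by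
      calc (-Av) * Bv
          = (z1.re+z2.re+z3.re) * (z1.re*z2.re + z1.re*z3.re + z2.re*z3.re
            - z1.im*z2.im - z1.im*z3.im - z2.im*z3.im) := by
            linear_combination (-Bv) * hre1 + (-(z1.re+z2.re+z3.re)) * hre2
      _ < z1.re*z2.re*z3.re - z1.re*z2.im*z3.im - z2.re*z1.im*z3.im - z3.re*z1.im*z2.im := by
            linear_combination hkey
      _ = -Cv := hre3
    -- numeric contradiction
    have hb2n : b2 = -|b2| := by rw [abs_of_neg hneg]; ring
    have hCub : -Cv ≤ -c0*θ^2 + K*θ^2*(K*θ^2) := by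
      rw [hCv, hc0def]
      have h1 : bhat θ ≤ b2*θ^2 + (|b2|/4)*θ^2 := by linarith [ebl.2]
      have hbq : b2*θ^2 = -(|b2| * θ^2) := by rw [abs_of_neg hneg]; ring
      linarith [hafl.1]
    have hABl : -(2*K*θ^2*((K^2+2*K)*θ^2)) ≤ (-Av) * Bv := by
      have h1 : Av * Bv ≤ |Av * Bv| := le_abs_self _
      have h2 : |Av * Bv| ≤ 2*K*θ^2*((K^2+2*K)*θ^2) := by
        rw [abs_mul]
        exact mul_le_mul hAb hBb (abs_nonneg _) (by linarith [hKt2])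
      nlinarith
    have hq1 : θ^2*M*θ^2 < c0*θ^2 := mul_lt_mul_of_pos_right htM ht0
    have hMq : M*θ^2*θ^2 = (2*K*(K^2+2*K)+K^2+1)*θ^2*θ^2 := by rw [hMdef]
    have hq0 : 0 < θ^2*θ^2 := mul_pos ht0 ht0
    linarith [hABl, hAB, hCub, hq1, hMq, hq0]
  · -- b2 > 0 : positive real root via IVT
    have hb2p : |b2| = b2 := abs_of_pos hpos
    have hCneg : Cv < 0 := by
      rw [hCv]
      have h1 : b2*θ^2 - (|b2|/4)*θ^2 ≤ bhat θ := by linarith [ebl.1]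
      rw [hb2p] at h1
      have hstep : K^2*θ^2 < c0 := by
        have h3 := mul_le_mul_of_nonneg_right hKM (le_of_lt ht0)
        linarith [htM]
      have h2 : K*θ^2*(K*θ^2) < c0*θ^2 := by
        linarith [mul_lt_mul_of_pos_right hstep ht0]
      have hceq : c0*θ^2 = 3*b2/4*θ^2 := by
        rw [show c0 = 3*b2/4 from by rw [hc0def, hb2p]]
      linarith [hafl.2]
    obtain ⟨r, hr0, hr⟩ := cubic_real_root_nonneg Av Bv Cv hCneg
    refine ⟨(r:ℂ), ?_, by simpa using hr0⟩
    have hgoal : ((r:ℂ))^3 - ((ahat θ + ghat θ : ℝ):ℂ)*((r:ℂ))^2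
        + ((Bv:ℝ):ℂ)*(r:ℂ) + ((Cv:ℝ):ℂ)
        = ((r^3 + Av*r^2 + Bv*r + Cv : ℝ) : ℂ) := by
      rw [hAv]; push_cast; ring
    rw [hgoal, hr, Complex.ofReal_zero]
end

section
/- For the 1-D DAPI-controlled platoon, the H2-norm density p̂(θ) = 1/(4g₀f₊(1-cos θ) + 2(c₀g₀f₊ + 2c₀f₊a₊(1-cos θ))/(f₊ + a₊g₀ + 2a₊²(1-cos θ))) with parameters f₊, g₀, c₀, a₊ > 0 is uniformly bounded on [-π,π]: there exists M > 0 with 0 < p̂(θ) ≤ M for all θ ∈ [-π,π], and in particular p̂(0) = (f₊ + a₊g₀)/(2c₀g₀f₊) is finite. -/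
/-!
Write `s = 1 - cos θ ≥ 0` and `x = g₀ + 2a₊s`. The denominator of `p̂` is
`4g₀f₊s + 2c₀f₊ · x / (f₊ + a₊x)`, and `x ↦ x / (f₊ + a₊x)` is increasing on `x ≥ 0`, so the
denominator is smallest at `s = 0`. Hence `p̂` is positive and attains its maximum `p̂(0)` at `θ = 0`.
-/

open Real

lemma div_add_mul_le_div_add_mul {f a x y : ℝ} (hf : 0 < f) (ha : 0 ≤ a) (hx : 0 ≤ x)
    (hxy : x ≤ y) : x / (f + a * x) ≤ y / (f + a * y) := by
  have hy := hx.trans hxy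
  rw [div_le_div_iff₀ (by positivity) (by positivity)]
  nlinarith [mul_le_mul_of_nonneg_left hxy hf.le]

/-- The denominator of the density `p̂`, as a function of `s = 1 - cos θ`. -/
noncomputable def platoonDensityDenom (fp g0 c0 ap s : ℝ) : ℝ :=
  4 * g0 * fp * s + 2 * (c0 * g0 * fp + 2 * c0 * fp * ap * s) / (fp + ap * g0 + 2 * ap ^ 2 * s)

section

variable {fp g0 c0 ap : ℝ}

lemma platoonDensityDenom_zero :
    platoonDensityDenom fp g0 c0 ap 0 = 2 * c0 * g0 * fp / (fp + ap * g0) := by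
  simp [platoonDensityDenom, mul_assoc]

lemma platoonDensityDenom_zero_le (hfp : 0 < fp) (hg0 : 0 < g0) (hc0 : 0 < c0) (hap : 0 < ap)
    {s : ℝ} (hs : 0 ≤ s) : platoonDensityDenom fp g0 c0 ap 0 ≤ platoonDensityDenom fp g0 c0 ap s := by
  have hform : ∀ t, platoonDensityDenom fp g0 c0 ap t =
      4 * g0 * fp * t + 2 * c0 * fp * ((g0 + 2 * ap * t) / (fp + ap * (g0 + 2 * ap * t))) := by
    intro t
    simp only [platoonDensityDenom]
    ring
  rw [hform, hform]
  refine add_le_add (by rw [mul_zero]; positivity) (mul_le_mul_of_nonneg_left ?_ (by positivity))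
  exact div_add_mul_le_div_add_mul hfp hap.le (by positivity) (by nlinarith)

end

/-- The H2-norm density of the 1-D DAPI-controlled platoon is uniformly bounded on
`[-π,π]` (full coherence), with `p̂(0) = (f₊ + a₊g₀)/(2c₀g₀f₊)`. -/
theorem stmt_16 (fp g0 c0 ap : ℝ) (hfp : 0 < fp) (hg0 : 0 < g0) (hc0 : 0 < c0) (hap : 0 < ap)
    (p : ℝ → ℝ)
    (hp : ∀ θ : ℝ, p θ = 1 / (4 * g0 * fp * (1 - Real.cos θ) +
      2 * (c0 * g0 * fp + 2 * c0 * fp * ap * (1 - Real.cos θ)) /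
        (fp + ap * g0 + 2 * ap ^ 2 * (1 - Real.cos θ)))) :
    (∃ M : ℝ, 0 < M ∧ ∀ θ ∈ Set.Icc (-Real.pi) Real.pi, 0 < p θ ∧ p θ ≤ M) ∧
      p 0 = (fp + ap * g0) / (2 * c0 * g0 * fp) := by
  have hp' : ∀ θ, p θ = 1 / platoonDensityDenom fp g0 c0 ap (1 - cos θ) := hp
  have hp0 : p 0 = (fp + ap * g0) / (2 * c0 * g0 * fp) := by
    rw [hp', cos_zero, sub_self, platoonDensityDenom_zero, one_div_div]
  have hden0 : 0 < platoonDensityDenom fp g0 c0 ap 0 := by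
    rw [platoonDensityDenom_zero]
    positivity
  refine ⟨⟨p 0, by rw [hp0]; positivity, fun θ _ => ?_⟩, hp0⟩
  have hle := platoonDensityDenom_zero_le hfp hg0 hc0 hap (sub_nonneg.2 (cos_le_one θ))
  rw [hp' θ, hp' 0, cos_zero, sub_self]
  exact ⟨one_div_pos.2 (hden0.trans_le hle), one_div_le_one_div_of_le hden0 hle⟩
end
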